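/- arXiv:1009.4062 — 5 statements merged into one kernel-verified Lean document; each statement's English description precedes it below -/
import Mathlib

section
/- The number of nowhere-zero Z_Q-flows on a finite graph G equals the sum over all edge subsets E' of E of (-1)^{|E|-|E'|} Q^{c(E')}, where c(E') is the cyclomatic number (number of independent cycles) of the spanning subgraph (V,E'). -/
/-!
Inclusion–exclusion over the set of edges on which a flow vanishes reduces the count to the
number of `ZMod Q`-flows supported on each edge set `E'`, i.e. to the kernel of the boundary
map `∂ : M^{E'} → M^V`. The image of `∂` consists exactly of the vertex functions whose sum
over every connected component of `(V, E')` vanishes, since a path from `v` to `w` carries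
the difference of the point masses at `v` and `w`. Counting through
`M^{E'} → M^V → M^{components}` gives `|M|^{|V|} |ker ∂| = |M|^{|E'| + k(E')}`, hence
`Q^{c(E')}` flows supported on `E'`.
-/

open Finset

structure OGraph where
  V : Type
  E : Type
  [fV : Fintype V]
  [fE : Fintype E]
  [dV : DecidableEq V]
  [dE : DecidableEq E]
  s : E → V
  t : E → V

attribute [instance] OGraph.fV OGraph.fE OGraph.dV OGraph.dE

namespace OGraph
variable (G : OGraph)

/-- Two vertices are related if some edge of `E'` joins them. -/
def conn (E' : Finset G.E) (u v : G.V) : Prop :=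
  ∃ e ∈ E', (G.s e = u ∧ G.t e = v) ∨ (G.s e = v ∧ G.t e = u)

/-- Number of connected components of the spanning subgraph `(V, E')`. -/
noncomputable def k (E' : Finset G.E) : ℕ := Nat.card (Quot (G.conn E'))

/-- Cyclomatic number `c(E') = |E'| - |V| + k(E')`. -/
noncomputable def c (E' : Finset G.E) : ℕ := E'.card + G.k E' - Fintype.card G.V

/-- The flow polynomial, evaluated at `Q`. -/
noncomputable def flowPoly (Q : ℤ) : ℤ :=
  ∑ E' : Finset G.E, (-1 : ℤ) ^ (Fintype.card G.E - E'.card) * Q ^ G.c E'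

/-- `φ` satisfies Kirchhoff's conservation law at every vertex. -/
def IsFlow (Q : ℕ) (φ : G.E → ZMod Q) : Prop :=
  ∀ v : G.V, (∑ e : G.E, if G.s e = v then φ e else 0) =
             (∑ e : G.E, if G.t e = v then φ e else 0)

/-- Number of nowhere-zero `ZMod Q`-flows on `G`. -/
noncomputable def nzFlowCount (Q : ℕ) : ℕ :=
  Nat.card {φ : G.E → ZMod Q // (∀ e, φ e ≠ 0) ∧ G.IsFlow Q φ}

end OGraph

theorem LinearMap.card_ker_mul_card_range {R X Y : Type*} [Ring R] [AddCommGroup X]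
    [AddCommGroup Y] [Module R X] [Module R Y] (f : X →ₗ[R] Y) :
    Nat.card (LinearMap.ker f) * Nat.card (LinearMap.range f) = Nat.card X := by
  rw [Submodule.card_eq_card_quotient_mul_card (LinearMap.ker f),
    Nat.card_congr f.quotKerEquivRange.toEquiv]

theorem Nat.eq_pow_sub_of_pow_mul_eq_pow {q a m n : ℕ} (hq : 0 < q) (h : q ^ m * a = q ^ n) :
    a = q ^ (n - m) := by
  obtain rfl | hq₁ := eq_or_lt_of_le (show 1 ≤ q from hq)
  · simpa using h
  have hmn : m ≤ n := (Nat.pow_dvd_pow_iff_le_right hq₁).1 (Dvd.intro a h)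
  rw [← Nat.add_sub_cancel' hmn, pow_add] at h
  exact Nat.eq_of_mul_eq_mul_left (pow_pos hq m) h

theorem Finset.card_eq_natCard_subtype_and {α : Type*} {P p : α → Prop}
    (s : Finset (Subtype P)) (hs : ∀ x, x ∈ s ↔ p x.1) :
    #s = Nat.card {x // P x ∧ p x} := by
  rw [← Nat.card_eq_finsetCard]
  exact Nat.card_congr <|
    (Equiv.subtypeEquivRight hs).trans (Equiv.subtypeSubtypeEquivSubtypeInter _ _)

namespace OGraph

variable (G : OGraph) (R M : Type*) [Ring R] [AddCommGroup M] [Module R M]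

noncomputable def boundary (E' : Finset G.E) : (E' → M) →ₗ[R] (G.V → M) :=
  FunOnFinite.linearMap R M (fun e : E' ↦ G.s e) -
    FunOnFinite.linearMap R M (fun e : E' ↦ G.t e)

noncomputable def componentSum (E' : Finset G.E) : (G.V → M) →ₗ[R] (Quot (G.conn E') → M) :=
  FunOnFinite.linearMap R M (Quot.mk _)

variable {G R M}

theorem componentSum_comp_boundary (E' : Finset G.E) :
    G.componentSum R M E' ∘ₗ G.boundary R M E' = 0 := by
  have hst : (Quot.mk (G.conn E') ∘ fun e : E' ↦ G.s e) = Quot.mk _ ∘ fun e : E' ↦ G.t e :=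
    funext fun e ↦ Quot.sound ⟨e, e.2, .inl ⟨rfl, rfl⟩⟩
  rw [componentSum, boundary, LinearMap.comp_sub, ← FunOnFinite.linearMap_comp,
    ← FunOnFinite.linearMap_comp, hst, sub_self]

theorem componentSum_surjective (E' : Finset G.E) :
    Function.Surjective (G.componentSum R M E') := by
  refine Function.LeftInverse.surjective (g := FunOnFinite.linearMap R M Quot.out) fun y ↦ ?_
  have hout : (Quot.mk (G.conn E') ∘ Quot.out) = id := funext Quot.out_eq
  rw [componentSum, ← LinearMap.comp_apply, ← FunOnFinite.linearMap_comp, hout,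
    FunOnFinite.linearMap_id, LinearMap.id_apply]

theorem single_sub_single_mem_range_boundary {E' : Finset G.E} {v w : G.V}
    (h : Relation.EqvGen (G.conn E') v w) (a : M) :
    Pi.single v a - Pi.single w a ∈ LinearMap.range (G.boundary R M E') := by
  induction h with
  | rel _ _ hvw =>
    obtain ⟨e, he, hends⟩ := hvw
    have hedge :
        Pi.single (G.s e) a - Pi.single (G.t e) a ∈ LinearMap.range (G.boundary R M E') :=
      ⟨Pi.single ⟨e, he⟩ a, by simp [boundary]⟩
    obtain ⟨rfl, rfl⟩ | ⟨rfl, rfl⟩ := hends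
    · exact hedge
    · simpa using neg_mem hedge
  | refl => simp
  | symm _ _ _ ih => simpa using neg_mem ih
  | trans _ _ _ _ _ ih₁ ih₂ => simpa using add_mem ih₁ ih₂

theorem range_boundary_eq_ker_componentSum (E' : Finset G.E) :
    LinearMap.range (G.boundary R M E') = LinearMap.ker (G.componentSum R M E') := by
  refine le_antisymm (LinearMap.range_le_ker_iff.2 (componentSum_comp_boundary E')) fun x hx ↦ ?_
  -- Moving all mass of `x` to one representative per component factors through `componentSum`.
  set rep : G.V → G.V := fun v ↦ (Quot.mk (G.conn E') v).out
  have hrep : FunOnFinite.linearMap R M rep x = 0 := by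
    rw [show rep = Quot.out ∘ Quot.mk (G.conn E') from rfl, FunOnFinite.linearMap_comp,
      LinearMap.comp_apply, ← componentSum, hx, map_zero]
  have hx_eq : x = ∑ v, (Pi.single v (x v) - Pi.single (rep v) (x v)) := by
    conv_lhs => rw [← sub_zero x, ← hrep, ← Finset.univ_sum_single x]
    simp only [map_sum, FunOnFinite.linearMap_piSingle, Finset.sum_sub_distrib]
  rw [hx_eq]
  exact Submodule.sum_mem _ fun v _ ↦
    single_sub_single_mem_range_boundary (Quot.eq.1 (Quot.out_eq _).symm) _

theorem card_pow_mul_card_ker_boundary (E' : Finset G.E) :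
    Nat.card M ^ Fintype.card G.V * Nat.card (LinearMap.ker (G.boundary R M E')) =
      Nat.card M ^ (#E' + G.k E') := by
  have hσ := (G.componentSum R M E').card_ker_mul_card_range
  have hδ := (G.boundary R M E').card_ker_mul_card_range
  rw [LinearMap.range_eq_top.2 (componentSum_surjective E'),
    Nat.card_congr Submodule.topEquiv.toEquiv, Nat.card_fun, Nat.card_fun,
    Nat.card_eq_fintype_card (α := G.V)] at hσ
  rw [range_boundary_eq_ker_componentSum, Nat.card_fun, Nat.card_eq_finsetCard] at hδ
  rw [pow_add, ← hδ, ← hσ, k]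
  ring

theorem card_ker_boundary [Finite M] (E' : Finset G.E) :
    Nat.card (LinearMap.ker (G.boundary R M E')) = Nat.card M ^ G.c E' :=
  Nat.eq_pow_sub_of_pow_mul_eq_pow Nat.card_pos (card_pow_mul_card_ker_boundary E')

variable {Q : ℕ}

theorem isFlow_iff_boundary_eq_zero {E' : Finset G.E} {φ : G.E → ZMod Q}
    (hφ : ∀ e ∉ E', φ e = 0) :
    G.IsFlow Q φ ↔ G.boundary (ZMod Q) (ZMod Q) E' (fun e ↦ φ e) = 0 := by
  have hsum (f : G.E → G.V) (v : G.V) :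
      ∑ e : E', (if f e = v then φ e else 0) = ∑ e, if f e = v then φ e else 0 := by
    rw [Finset.sum_coe_sort E' fun e ↦ if f e = v then φ e else 0]
    exact Finset.sum_subset (Finset.subset_univ E') fun e _ he ↦ by simp [hφ e he]
  simp only [IsFlow, funext_iff, boundary, LinearMap.sub_apply,
    FunOnFinite.linearMap_apply_apply, Finset.sum_filter, hsum, sub_eq_zero]

def flowsSupportedOnEquivKerBoundary (E' : Finset G.E) :
    {φ : G.E → ZMod Q // G.IsFlow Q φ ∧ ∀ e ∉ E', φ e = 0} ≃
      LinearMap.ker (G.boundary (ZMod Q) (ZMod Q) E') where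
  toFun φ := ⟨fun e ↦ φ.1 e, (isFlow_iff_boundary_eq_zero φ.2.2).1 φ.2.1⟩
  invFun ψ := by
    refine ⟨fun e ↦ if h : e ∈ E' then ψ.1 ⟨e, h⟩ else 0, ?_, fun e he ↦ dif_neg he⟩
    rw [isFlow_iff_boundary_eq_zero fun e he ↦ dif_neg he]
    simpa only [Finset.coe_mem, dif_pos, Subtype.coe_eta, LinearMap.mem_ker] using ψ.2
  left_inv φ := Subtype.ext <| funext fun e ↦ by
    by_cases he : e ∈ E'
    · exact dif_pos he
    · exact (dif_neg he).trans (φ.2.2 e he).symm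
  right_inv ψ := Subtype.ext <| funext fun e ↦ dif_pos e.2

theorem card_flows_supportedOn [NeZero Q] (E' : Finset G.E) :
    Nat.card {φ : G.E → ZMod Q // G.IsFlow Q φ ∧ ∀ e ∉ E', φ e = 0} = Q ^ G.c E' := by
  rw [Nat.card_congr (flowsSupportedOnEquivKerBoundary E'), card_ker_boundary, Nat.card_zmod]

theorem nzFlowCount_eq_sum_card_flows_supportedOn [NeZero Q] :
    (G.nzFlowCount Q : ℤ) = ∑ E' : Finset G.E, (-1) ^ (Fintype.card G.E - #E') *
      (Nat.card {φ : G.E → ZMod Q // G.IsFlow Q φ ∧ ∀ e ∉ E', φ e = 0} : ℤ) := by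
  classical
  let vanishingAt (e : G.E) := {φ : {φ // G.IsFlow Q φ} | φ.1 e = 0}.toFinset
  have h := Finset.inclusion_exclusion_card_inf_compl Finset.univ vanishingAt
  rw [Finset.powerset_univ, card_eq_natCard_subtype_and _ (p := fun φ ↦ ∀ e, φ e ≠ 0)
    (by simp [vanishingAt, Finset.mem_inf])] at h
  rw [nzFlowCount, Nat.card_congr (Equiv.subtypeEquivRight fun _ ↦ and_comm), h]
  refine Fintype.sum_equiv (compl_involutive.toPerm _) _ _ fun t ↦ ?_
  rw [Function.Involutive.coe_toPerm, Finset.card_compl, Nat.sub_sub_self (Finset.card_le_univ t),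
    card_eq_natCard_subtype_and _ (p := fun φ ↦ ∀ e ∈ t, φ e = 0)
      (by simp [vanishingAt, Finset.mem_inf])]
  simp only [Finset.mem_compl, not_not]

end OGraph

/-- The number of nowhere-zero `ZMod Q`-flows on a finite graph `G` equals
`∑_{E' ⊆ E} (-1)^{|E|-|E'|} Q^{c(E')}`. -/
theorem nzFlowCount_eq_flowPoly (G : OGraph) (Q : ℕ) (hQ : 0 < Q) :
    (G.nzFlowCount Q : ℤ) = G.flowPoly (Q : ℤ) := by
  have : NeZero Q := ⟨hQ.ne'⟩
  simp only [G.nzFlowCount_eq_sum_card_flows_supportedOn, OGraph.flowPoly,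
    OGraph.card_flows_supportedOn, Nat.cast_pow]
end

section
/- The flow polynomial of the cyclic ladder graph G(n,1) (the n-prism) is Phi(Q) = (Q^2-3Q+1)(-1)^n + (Q-1)(Q-3)^n + (Q-2)^n. -/
open Finset

/-- The cyclic ladder (prism) graph `G(n,1)`: outer vertices `i_p = Sum.inl p`,
inner vertices `j_p = Sum.inr p`; spokes `(i_p, j_p)`, outer edges
`(i_p, i_{p+1})`, inner edges `(j_p, j_{p+1})` (indices mod n). -/
def prism (n : ℕ) [NeZero n] : OGraph where
  V := Fin n ⊕ Fin n
  E := Fin n ⊕ (Fin n ⊕ Fin n)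
  s := fun e =>
    match e with
    | .inl p => .inl p
    | .inr (.inl p) => .inl p
    | .inr (.inr p) => .inr p
  t := fun e =>
    match e with
    | .inl p => .inr p
    | .inr (.inl p) => .inl (p + 1)
    | .inr (.inr p) => .inr (p + 1)

/-!
Multiplying by `q ^ |V|` turns the subset expansion into a sum over vertex colourings
`σ : V → Fin q` of `∏ₑ (q·[σ (s e) = σ (t e)] - 1)`, because `q ^ k(E')` counts the colourings
that are constant on the components of `(V, E')`. For the prism this sum is the trace of the
`n`-th power of a transfer matrix on pairs of colours, `diag (B a b) * (B ⊗ B)` with `B = q·P`,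
`P = 1 - J/q` the centering projection. Compressing by the projection `P ⊗ P` and moving the
diagonal embedding `E` (with `E Eᵀ` the projection onto the pairs `(c, c)`) around the trace
leaves the `q × q` matrix `(q-3)·P + (q-2)·(1-P)`: the transfer matrix has eigenvalues
`q²(q-3)` (multiplicity `q-1`), `q²(q-2)` (once) and `-q²` (multiplicity `q²-3q+1`).
Both sides of the identity are polynomials in `Q`, so positive integers `Q` suffice.
-/

theorem add_pow_of_mul_eq_zero {R : Type*} [Semiring R] {x y : R} (hxy : x * y = 0)
    (hyx : y * x = 0) {n : ℕ} (hn : n ≠ 0) : (x + y) ^ n = x ^ n + y ^ n := by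
  obtain ⟨n, rfl⟩ := Nat.exists_eq_succ_of_ne_zero hn
  induction n with
  | zero => simp
  | succ n ih =>
    have hxny : x ^ (n + 1) * y = 0 := by rw [pow_succ, mul_assoc, hxy, mul_zero]
    have hynx : y ^ (n + 1) * x = 0 := by rw [pow_succ, mul_assoc, hyx, mul_zero]
    rw [pow_succ, ih n.succ_ne_zero, add_mul, mul_add, mul_add, hxny, hynx, add_zero, zero_add,
      ← pow_succ, ← pow_succ]

namespace Matrix

section Rectangular

variable {m k R : Type*} [Fintype m] [Fintype k] [DecidableEq m] [DecidableEq k]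

theorem mul_pow_succ [Semiring R] (A : Matrix m k R) (B : Matrix k m R) (n : ℕ) :
    (A * B) ^ (n + 1) = A * (B * A) ^ n * B := by
  induction n with
  | zero => simp
  | succ n ih => rw [pow_succ, ih, pow_succ, Matrix.mul_assoc, Matrix.mul_assoc, Matrix.mul_assoc,
      Matrix.mul_assoc, Matrix.mul_assoc]

theorem trace_pow_mul_comm [CommSemiring R] (A : Matrix m k R) (B : Matrix k m R) {n : ℕ} (hn : n ≠ 0) :
    trace ((A * B) ^ n) = trace ((B * A) ^ n) := by
  obtain ⟨n, rfl⟩ := Nat.exists_eq_succ_of_ne_zero hn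
  rw [mul_pow_succ, Matrix.mul_assoc, trace_mul_comm, Matrix.mul_assoc, ← pow_succ]

/-- `A * B` and `B * A` have the same nonzero spectrum; the multiplicities of `0` differ by
`card m - card k`, which `f.eval 0` accounts for. -/
theorem trace_aeval_mul_comm [CommRing R] (A : Matrix m k R) (B : Matrix k m R) (f : Polynomial R) :
    trace (Polynomial.aeval (A * B) f) + f.eval 0 * Fintype.card k =
      trace (Polynomial.aeval (B * A) f) + f.eval 0 * Fintype.card m := by
  induction f using Polynomial.induction_on' with
  | add f g hf hg => simp only [map_add, trace_add, Polynomial.eval_add]; linear_combination hf + hg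
  | monomial j a =>
    rcases j with _ | j
    · simp [Algebra.algebraMap_eq_smul_one]; ring
    · simp [Algebra.algebraMap_eq_smul_one, trace_pow_mul_comm A B j.succ_ne_zero]

theorem trace_pow_smul_mul_sub_one [CommRing R] (A : Matrix m k R) (B : Matrix k m R) (c : R) (n : ℕ) :
    trace ((c • (A * B) - 1) ^ n) =
      trace ((c • (B * A) - 1) ^ n) + (-1) ^ n * ((Fintype.card m : R) - Fintype.card k) := by
  have h := trace_aeval_mul_comm A B ((Polynomial.C c * Polynomial.X - 1) ^ n)
  simp only [map_pow, map_sub, map_mul, Polynomial.aeval_C, Polynomial.aeval_X, map_one,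
    Algebra.algebraMap_eq_smul_one, smul_mul_assoc, one_mul, Polynomial.eval_pow,
    Polynomial.eval_sub, Polynomial.eval_mul, Polynomial.eval_C, Polynomial.eval_X, mul_zero,
    Polynomial.eval_one, zero_sub] at h
  linear_combination h

theorem trace_pow_smul_mul_sub_one_mul_of_isIdempotentElem [CommRing R] {P : Matrix m m R}
    (hP : IsIdempotentElem P) (A : Matrix m k R) (B : Matrix k m R) (c : R) {n : ℕ}
    (hn : n ≠ 0) :
    trace (((c • (A * B) - 1) * P) ^ n) =
      trace ((c • (B * P * A) - 1) ^ n) + (-1) ^ n * (trace P - Fintype.card k) := by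
  set W := P * A * (B * P)
  have hWP : W * P = W := by simp only [W, Matrix.mul_assoc, hP.eq]
  have hPW : P * W = W := by simp only [W, ← Matrix.mul_assoc, hP.eq]
  have hcompress : trace (((c • (A * B) - 1) * P) ^ n) = trace ((c • W - P) ^ n) := by
    calc trace (((c • (A * B) - 1) * P) ^ n)
        = trace (((c • (A * B) - 1) * P * P) ^ n) := by rw [Matrix.mul_assoc _ P P, hP.eq]
      _ = trace ((P * ((c • (A * B) - 1) * P)) ^ n) := (trace_pow_mul_comm P _ hn).symm
      _ = trace ((c • W - P) ^ n) := by
        congr 2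
        simp only [W, Matrix.mul_sub, Matrix.sub_mul, Matrix.mul_smul, Matrix.smul_mul,
          Matrix.one_mul, hP.eq, Matrix.mul_assoc]
  have horth : (c • W - 1) ^ n = (c • W - P) ^ n + (-1 : R) ^ n • (1 - P) := by
    rw [show c • W - 1 = (c • W - P) + (-1 : R) • (1 - P) by rw [neg_one_smul]; abel,
      add_pow_of_mul_eq_zero _ _ hn, smul_pow, hP.one_sub.pow_eq hn]
    · simp only [Matrix.mul_smul, Matrix.sub_mul, Matrix.mul_sub, Matrix.smul_mul, Matrix.mul_one,
        hWP, hP.eq, sub_self, smul_zero]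
    · simp only [Matrix.smul_mul, Matrix.sub_mul, Matrix.mul_sub, Matrix.mul_smul,
        Matrix.one_mul, hPW, hP.eq, sub_self, smul_zero]
  have hsylv := trace_pow_smul_mul_sub_one (P * A) (B * P) c n
  rw [show B * P * (P * A) = B * P * A by rw [← Matrix.mul_assoc, Matrix.mul_assoc B, hP.eq],
    horth, trace_add, trace_smul, trace_sub, trace_one, smul_eq_mul] at hsylv
  rw [hcompress]
  linear_combination hsylv

end Rectangular

section Square

variable {J R : Type*} [Fintype J] [DecidableEq J]

theorem trace_pow_smul_add_smul_one_sub [CommRing R] {P : Matrix J J R} (hP : IsIdempotentElem P) (a b : R)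
    {n : ℕ} (hn : n ≠ 0) :
    trace ((a • P + b • (1 - P)) ^ n) = a ^ n * trace P + b ^ n * (Fintype.card J - trace P) := by
  rw [add_pow_of_mul_eq_zero _ _ hn, smul_pow, smul_pow, hP.pow_eq hn, hP.one_sub.pow_eq hn,
    trace_add, trace_smul, trace_smul, trace_sub, trace_one, smul_eq_mul, smul_eq_mul]
  · rw [smul_mul_smul_comm, hP.mul_one_sub_self, smul_zero]
  · rw [smul_mul_smul_comm, hP.one_sub_mul_self, smul_zero]

theorem sum_prod_path_mul_eq_trace [CommSemiring R] (M N : Matrix J J R) (n : ℕ) :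
    ∑ τ : Fin (n + 1) → J, (∏ p : Fin n, M (τ p.castSucc) (τ p.succ)) * N (τ (Fin.last n)) (τ 0) =
      trace (M ^ n * N) := by
  induction n generalizing N with
  | zero =>
    rw [← (Equiv.funUnique (Fin 1) J).symm.sum_comp]
    simp [trace]
  | succ n ih =>
    rw [← (Fin.snocEquiv fun _ => J).sum_comp, Fintype.sum_prod_type, sum_comm, pow_succ,
      Matrix.mul_assoc, ← ih]
    refine sum_congr rfl fun τ _ => ?_
    simp [Fin.snocEquiv, Fin.prod_univ_castSucc, mul_apply, mul_sum, mul_assoc, Fin.succ_castSucc,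
      -Fin.castSucc_succ]

theorem trace_pow_eq_sum_prod [CommSemiring R] (M : Matrix J J R) (n : ℕ) [NeZero n] :
    trace (M ^ n) = ∑ τ : Fin n → J, ∏ p, M (τ p) (τ (p + 1)) := by
  obtain ⟨n, rfl⟩ := Nat.exists_eq_succ_of_ne_zero (NeZero.ne n)
  rw [pow_succ, ← sum_prod_path_mul_eq_trace]
  refine sum_congr rfl fun τ _ => ?_
  simp [Fin.prod_univ_castSucc, Fin.coeSucc_eq_succ]

end Square

end Matrix

namespace OGraph

variable (G : OGraph)

def constOnEquiv (E' : Finset G.E) (α : Type*) :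
    {σ : G.V → α // ∀ e ∈ E', σ (G.s e) = σ (G.t e)} ≃ (Quot (G.conn E') → α) where
  toFun σ := Quot.lift σ.1 <| by
    rintro u v ⟨e, he, ⟨rfl, rfl⟩ | ⟨rfl, rfl⟩⟩
    exacts [σ.2 e he, (σ.2 e he).symm]
  invFun g := ⟨g ∘ Quot.mk _, fun e he => congrArg g (Quot.sound ⟨e, he, .inl ⟨rfl, rfl⟩⟩)⟩
  left_inv _ := rfl
  right_inv g := funext fun x => by induction x using Quot.ind; rfl

theorem card_constOn (E' : Finset G.E) (α : Type*) [Fintype α] [DecidableEq α] :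
    Fintype.card {σ : G.V → α // ∀ e ∈ E', σ (G.s e) = σ (G.t e)} = Fintype.card α ^ G.k E' := by
  rw [← Nat.card_eq_fintype_card, Nat.card_congr (G.constOnEquiv E' α), Nat.card_fun,
    Nat.card_eq_fintype_card, OGraph.k]

theorem k_empty : G.k ∅ = Fintype.card G.V := by
  have hinj : Function.Injective (Quot.mk (G.conn ∅)) := fun u v h => by
    simpa using congrArg (Quot.lift id fun _ _ ⟨e, he, _⟩ => absurd he (notMem_empty e)) h
  rw [OGraph.k, ← Nat.card_eq_fintype_card]
  exact Nat.card_congr (Equiv.ofBijective _ ⟨hinj, Quot.mk_surjective⟩).symm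

theorem k_le_k_insert_add_one (E' : Finset G.E) (e : G.E) :
    G.k E' ≤ G.k (insert e E') + 1 := by
  classical
  have := Fintype.ofFinite (Quot (G.conn E'))
  have := Fintype.ofFinite (Quot (G.conn (insert e E')))
  let f : Quot (G.conn E') → Quot (G.conn (insert e E')) :=
    Quot.mapRight fun u v ⟨e', he', h⟩ => ⟨e', mem_insert_of_mem he', h⟩
  let merge (a : Quot (G.conn E')) := if a = Quot.mk _ (G.t e) then Quot.mk _ (G.s e) else a
  let g : Quot (G.conn (insert e E')) → Quot (G.conn E') := Quot.lift (merge ∘ Quot.mk _) <| by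
    rintro u v ⟨e', he', h⟩
    rcases mem_insert.mp he' with rfl | he'
    · rcases h with ⟨rfl, rfl⟩ | ⟨rfl, rfl⟩ <;> simp [merge]
    · exact congrArg merge (Quot.sound ⟨e', he', h⟩)
  have hgf : ∀ a, a ≠ Quot.mk _ (G.t e) → g (f a) = a := fun a ha => by
    induction a using Quot.ind
    exact if_neg ha
  have hinj : Function.Injective fun a : {a // a ≠ Quot.mk (G.conn E') (G.t e)} => f a :=
    fun a b h => Subtype.ext <| by rw [← hgf a a.2, ← hgf b b.2]; exact congrArg g h
  have : Fintype.card (Quot (G.conn E')) - 1 ≤ Fintype.card (Quot (G.conn (insert e E'))) := by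
    simpa only [ne_eq, Fintype.card_subtype_compl, Fintype.card_unique] using
      Fintype.card_le_of_injective _ hinj
  rw [OGraph.k, OGraph.k, Nat.card_eq_fintype_card, Nat.card_eq_fintype_card]
  omega

theorem card_V_le_card_add_k (E' : Finset G.E) : Fintype.card G.V ≤ E'.card + G.k E' := by
  classical
  induction E' using Finset.induction_on with
  | empty => simp [k_empty]
  | insert e E' he ih =>
    rw [card_insert_of_notMem he]
    linarith [G.k_le_k_insert_add_one E' e]

theorem c_add_card_V (E' : Finset G.E) : G.c E' + Fintype.card G.V = E'.card + G.k E' := by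
  have := G.card_V_le_card_add_k E'
  rw [OGraph.c]
  omega

theorem flowPoly_mul_pow_card (R : Type*) [CommRing R] (q : ℕ) :
    (G.flowPoly q : R) * (q : R) ^ Fintype.card G.V =
      ∑ σ : G.V → Fin q, ∏ e, (if σ (G.s e) = σ (G.t e) then (q : R) - 1 else -1) := by
  classical
  have hcolour (σ : G.V → Fin q) :
      ∏ e, (if σ (G.s e) = σ (G.t e) then (q : R) - 1 else -1) =
        ∑ E' : Finset G.E, (-1) ^ (Fintype.card G.E - E'.card) * (q : R) ^ E'.card *
          if ∀ e ∈ E', σ (G.s e) = σ (G.t e) then 1 else 0 := by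
    have hsplit : ∀ e, (if σ (G.s e) = σ (G.t e) then (q : R) - 1 else -1) =
        (if σ (G.s e) = σ (G.t e) then (q : R) else 0) + -1 := fun e => by split_ifs <;> ring
    simp_rw [hsplit, prod_add, powerset_univ, prod_ite_zero, prod_const, ← compl_eq_univ_sdiff,
      card_compl]
    refine sum_congr rfl fun E' _ => ?_
    split_ifs <;> ring
  have hcount (E' : Finset G.E) : ∑ σ : G.V → Fin q,
      (if ∀ e ∈ E', σ (G.s e) = σ (G.t e) then (1 : R) else 0) = (q : R) ^ G.k E' := by
    rw [sum_boole, ← Fintype.card_subtype, card_constOn, Fintype.card_fin]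
    push_cast
    rfl
  simp_rw [hcolour]
  rw [sum_comm]
  simp_rw [← mul_sum, hcount, flowPoly, Int.cast_sum, sum_mul]
  refine sum_congr rfl fun E' _ => ?_
  push_cast
  rw [mul_assoc, mul_assoc, ← pow_add, ← pow_add, c_add_card_V]

open Polynomial in
noncomputable def flowPolynomial : ℤ[X] :=
  ∑ E' : Finset G.E, C ((-1) ^ (Fintype.card G.E - E'.card)) * X ^ G.c E'

theorem eval_flowPolynomial (Q : ℤ) : G.flowPolynomial.eval Q = G.flowPoly Q := by
  simp [flowPolynomial, flowPoly, Polynomial.eval_finsetSum]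

theorem flowPoly_eq_eval_of_forall_natCast (p : Polynomial ℤ)
    (h : ∀ q : ℕ, q ≠ 0 → G.flowPoly q = p.eval (q : ℤ)) (Q : ℤ) : G.flowPoly Q = p.eval Q := by
  have hp : G.flowPolynomial = p := by
    refine Polynomial.eq_of_infinite_eval_eq _ _ <|
      Set.infinite_of_injective_forall_mem (f := fun q : ℕ => ((q + 1 : ℕ) : ℤ)) ?_ fun q => ?_
    · exact fun a b hab => by simpa using hab
    · simp only [Set.mem_ofPred_eq, eval_flowPolynomial]
      exact h _ q.succ_ne_zero
  rw [← hp, eval_flowPolynomial]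

end OGraph

open Matrix
open scoped Kronecker

/-- The state at position `p` is the pair of colours `(x_p, y_p)`; the diagonal factor weighs the
rung `(x_p, y_p)` and the Kronecker factor the two rail edges towards position `p + 1`. -/
def ladderTransfer {ι R : Type*} [Fintype ι] [DecidableEq ι] [CommSemiring R] (B : Matrix ι ι R) :
    Matrix (ι × ι) (ι × ι) R :=
  diagonal (fun u => B u.1 u.2) * (B ⊗ₖ B)

theorem sum_prod_prism_eq_trace_ladderTransfer_pow {ι R : Type*} [Fintype ι] [DecidableEq ι]
    [CommSemiring R] (n : ℕ) [NeZero n] (B : Matrix ι ι R) :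
    ∑ σ : (prism n).V → ι, ∏ e, B (σ ((prism n).s e)) (σ ((prism n).t e)) =
      trace (ladderTransfer B ^ n) := by
  let e : (Fin n → ι × ι) ≃ ((prism n).V → ι) :=
    (Equiv.arrowProdEquivProdArrow _ _ _).trans (Equiv.sumArrowEquivProdArrow _ _ _).symm
  rw [trace_pow_eq_sum_prod, ← e.sum_comp]
  refine sum_congr rfl fun τ _ => ?_
  change ∏ x : Fin n ⊕ (Fin n ⊕ Fin n), _ = _
  simp only [Fintype.prod_sum_type, ladderTransfer, diagonal_mul, kroneckerMap_apply,
    prod_mul_distrib]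
  rfl

section Centering

variable {K : Type*} [Field K] {q : ℕ}

variable (K q) in
def centeringMatrix : Matrix (Fin q) (Fin q) K := 1 - (q : K)⁻¹ • of fun _ _ => 1

theorem allOnes_mul_self : (of fun _ _ => 1 : Matrix (Fin q) (Fin q) K) * of (fun _ _ => 1) =
    (q : K) • of fun _ _ => 1 := by
  ext; simp [mul_apply]

theorem isIdempotentElem_centeringMatrix (hq : (q : K) ≠ 0) :
    IsIdempotentElem (centeringMatrix K q) := by
  rw [IsIdempotentElem, centeringMatrix]
  simp only [sub_mul, mul_sub, Matrix.mul_one, Matrix.one_mul, Matrix.smul_mul, Matrix.mul_smul,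
    allOnes_mul_self, smul_smul, inv_mul_cancel₀ hq, one_smul]
  abel

theorem trace_centeringMatrix (hq : (q : K) ≠ 0) : trace (centeringMatrix K q) = q - 1 := by
  simp [centeringMatrix, trace, hq]

theorem smul_centeringMatrix_apply (hq : (q : K) ≠ 0) (x y : Fin q) :
    ((q : K) • centeringMatrix K q) x y = if x = y then (q : K) - 1 else -1 := by
  by_cases h : x = y <;> simp [centeringMatrix, one_apply, h, mul_sub, hq]

end Centering

section DiagEmbedding

variable {ι R : Type*} [Fintype ι] [DecidableEq ι] [Semiring R]

variable (ι R) in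
def diagEmbedding : Matrix (ι × ι) ι R :=
  (1 : Matrix (ι × ι) (ι × ι) R).submatrix (Equiv.refl _) fun c => (c, c)

theorem diagEmbedding_mul_transpose :
    diagEmbedding ι R * (diagEmbedding ι R)ᵀ = diagonal fun u => if u.1 = u.2 then 1 else 0 := by
  ext ⟨a, b⟩ ⟨c, d⟩
  simp only [diagEmbedding, mul_apply, one_apply, diagonal_apply, Prod.ext_iff, transpose_apply,
    submatrix_apply, Equiv.refl_apply]
  rw [Fintype.sum_eq_single c fun x hx => by simp [hx.symm]]
  grind

theorem transpose_diagEmbedding_mul_mul (X : Matrix (ι × ι) (ι × ι) R) :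
    (diagEmbedding ι R)ᵀ * X * diagEmbedding ι R =
      X.submatrix (fun c => (c, c)) fun c => (c, c) := by
  rw [diagEmbedding, transpose_submatrix, transpose_one, one_submatrix_mul, mul_submatrix_one]
  rfl

end DiagEmbedding

section Spectrum

variable {K : Type*} [Field K] {q : ℕ}

theorem ladderTransfer_smul_centeringMatrix (hq : (q : K) ≠ 0) :
    ladderTransfer ((q : K) • centeringMatrix K q) =
      (q : K) ^ 2 • (((q : K) • (diagEmbedding (Fin q) K * (diagEmbedding (Fin q) K)ᵀ) - 1) *
        (centeringMatrix K q ⊗ₖ centeringMatrix K q)) := by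
  have hrung : diagonal (fun u : Fin q × Fin q => ((q : K) • centeringMatrix K q) u.1 u.2) =
      (q : K) • (diagEmbedding (Fin q) K * (diagEmbedding (Fin q) K)ᵀ) - 1 := by
    rw [diagEmbedding_mul_transpose]
    ext ⟨a, b⟩ ⟨c, d⟩
    simp only [diagonal_apply, smul_centeringMatrix_apply hq, Matrix.sub_apply,
      Matrix.smul_apply, one_apply, Prod.ext_iff, smul_eq_mul]
    grind
  rw [ladderTransfer, hrung, smul_kronecker, kronecker_smul, smul_smul, ← sq, Matrix.mul_smul]

theorem compress_centeringMatrix_kronecker (hq : (q : K) ≠ 0) :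
    (q : K) • ((diagEmbedding (Fin q) K)ᵀ * (centeringMatrix K q ⊗ₖ centeringMatrix K q) *
      diagEmbedding (Fin q) K) - 1 =
        ((q : K) - 3) • centeringMatrix K q + ((q : K) - 2) • (1 - centeringMatrix K q) := by
  rw [transpose_diagEmbedding_mul_mul]
  ext a c
  by_cases h : a = c
  · simp [centeringMatrix, h]
    field_simp
    ring
  · simp [centeringMatrix, h, one_apply]
    field_simp
    ring

theorem trace_ladderTransfer_smul_centeringMatrix_pow (hq : (q : K) ≠ 0) {n : ℕ} (hn : n ≠ 0) :
    trace (ladderTransfer ((q : K) • centeringMatrix K q) ^ n) =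
      ((q : K) ^ 2) ^ n * (((q : K) ^ 2 - 3 * q + 1) * (-1) ^ n + (q - 1) * (q - 3) ^ n +
        (q - 2) ^ n) := by
  have hC := isIdempotentElem_centeringMatrix hq
  have hCC : IsIdempotentElem (centeringMatrix K q ⊗ₖ centeringMatrix K q) := by
    rw [IsIdempotentElem, ← mul_kronecker_mul, hC.eq]
  rw [ladderTransfer_smul_centeringMatrix hq, smul_pow, trace_smul,
    trace_pow_smul_mul_sub_one_mul_of_isIdempotentElem hCC _ _ _ hn,
    compress_centeringMatrix_kronecker hq, trace_pow_smul_add_smul_one_sub hC _ _ hn,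
    trace_kronecker, trace_centeringMatrix hq, Fintype.card_fin, smul_eq_mul]
  ring

end Spectrum

theorem prism_flowPoly_natCast (n : ℕ) [NeZero n] {q : ℕ} (hq : q ≠ 0) :
    (prism n).flowPoly q =
      ((q : ℤ) ^ 2 - 3 * q + 1) * (-1) ^ n + (q - 1) * (q - 3) ^ n + (q - 2) ^ n := by
  have hq' : (q : ℚ) ≠ 0 := Nat.cast_ne_zero.mpr hq
  have hV : Fintype.card (prism n).V = 2 * n := by
    rw [← Nat.card_eq_fintype_card]
    simp [prism, two_mul]
  have h := (prism n).flowPoly_mul_pow_card ℚ q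
  simp_rw [← smul_centeringMatrix_apply hq', sum_prod_prism_eq_trace_ladderTransfer_pow,
    trace_ladderTransfer_smul_centeringMatrix_pow hq' (NeZero.ne n), hV, pow_mul] at h
  rw [mul_comm] at h
  exact_mod_cast mul_left_cancel₀ (pow_ne_zero n (pow_ne_zero 2 hq')) h

open Polynomial in
/-- The flow polynomial of the cyclic ladder `G(n,1)` is
`(Q²-3Q+1)(-1)ⁿ + (Q-1)(Q-3)ⁿ + (Q-2)ⁿ`. -/
theorem prism_flowPoly (n : ℕ) [NeZero n] (Q : ℤ) :
    (prism n).flowPoly Q =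
      (Q ^ 2 - 3 * Q + 1) * (-1) ^ n + (Q - 1) * (Q - 3) ^ n + (Q - 2) ^ n := by
  set p : ℤ[X] := (X ^ 2 - 3 * X + 1) * (-1) ^ n + (X - 1) * (X - 3) ^ n + (X - 2) ^ n
  have hp (x : ℤ) : p.eval x =
      (x ^ 2 - 3 * x + 1) * (-1) ^ n + (x - 1) * (x - 3) ^ n + (x - 2) ^ n := by
    simp [p]
  rw [← hp]
  exact (prism n).flowPoly_eq_eval_of_forall_natCast p
    (fun q hq => (prism_flowPoly_natCast n hq).trans (hp q).symm) Q
end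

section
/- Sum rule: for every k >= 0, sum over ell from 0 to k of (1/ell!) * beta_ell * |A_k^{(ell)}| = Q^k as polynomials in Q, where |A_k^{(ell)}| = ell! * sum_{s=0}^{k-ell} binomial(ell+s,ell) S(k,ell+s) is the number of partitions of a k-set with ell marked distinguishable blocks, and beta_ell = sum_{i=0}^{ell} (-1)^{ell-i} binomial(ell,i) Q^{falling i}. -/
open Finset Polynomial

/-- The Stirling number of the second kind: the number of set partitions of an
`n`-element set into exactly `s` blocks. -/
noncomputable def stirling (n s : ℕ) : ℕ :=
  Nat.card {P : Finpartition (Finset.univ : Finset (Fin n)) // P.parts.card = s}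

/-- `β_ℓ(Q) = ∑_{i=0}^{ℓ} (-1)^{ℓ-i} C(ℓ,i) Q^{falling i}`. -/
noncomputable def beta (ℓ : ℕ) (Q : ℚ) : ℚ :=
  ∑ i ∈ Finset.range (ℓ + 1),
    (-1) ^ (ℓ - i) * (ℓ.choose i : ℚ) * (descPochhammer ℚ i).eval Q

/-!
Grouping the maps `Fin k → Fin n` by the partition into their fibres gives
`n ^ k = ∑ₘ S(k, m) n^{falling m}`, hence `X ^ k = ∑ₘ S(k, m) X^{falling m}` as polynomials.
`β_ℓ` is the `ℓ`-th forward difference at `0` of `i ↦ Q^{falling i}`, so Newton's forward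
difference formula gives `∑_ℓ C(m, ℓ) β_ℓ = Q^{falling m}`. Marking `ℓ` of the `m` blocks of a
partition shows `|A_k^{(ℓ)}| / ℓ! = ∑ₘ C(m, ℓ) S(k, m)`; exchanging the two sums then turns the
left-hand side into `∑ₘ S(k, m) Q^{falling m} = Q ^ k`.
-/

namespace Finpartition

variable {α β : Type*} [Fintype α] [DecidableEq α]

theorem parts_eq_image_part (P : Finpartition (univ : Finset α)) :
    P.parts = univ.image P.part := by
  ext t
  refine ⟨fun ht => ?_, fun ht => ?_⟩
  · obtain ⟨a, ha⟩ := P.nonempty_of_mem_parts ht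
    exact mem_image.2 ⟨a, mem_univ a, P.part_eq_of_mem ht ha⟩
  · obtain ⟨a, -, rfl⟩ := mem_image.1 ht
    exact P.part_mem.2 (mem_univ a)

theorem part_eq_filter (P : Finpartition (univ : Finset α)) (a : α) :
    P.part a = ({b | P.part b = P.part a} : Finset α) := by
  ext b
  simp [P.mem_part_iff_part_eq_part (mem_univ b) (mem_univ a)]

def sigmaEmbeddingToFun (x : Σ P : Finpartition (univ : Finset α), P.parts ↪ β) : α → β :=
  fun a => x.2 ⟨x.1.part a, x.1.part_mem.2 (mem_univ a)⟩

theorem sigmaEmbeddingToFun_eq_iff (P : Finpartition (univ : Finset α)) (ι : P.parts ↪ β)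
    (a b : α) : sigmaEmbeddingToFun ⟨P, ι⟩ a = sigmaEmbeddingToFun ⟨P, ι⟩ b ↔
      P.part a = P.part b :=
  ι.injective.eq_iff.trans Subtype.ext_iff

theorem sigmaEmbeddingToFun_injective :
    Function.Injective (sigmaEmbeddingToFun (α := α) (β := β)) := by
  rintro ⟨P, ι⟩ ⟨P', ι'⟩ h
  have hpart : ∀ a, P.part a = P'.part a := fun a => by
    rw [P.part_eq_filter, P'.part_eq_filter]
    refine filter_congr fun b _ => ?_
    rw [← sigmaEmbeddingToFun_eq_iff P ι, ← sigmaEmbeddingToFun_eq_iff P' ι', h]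
  obtain rfl : P = P' := by
    ext1
    rw [parts_eq_image_part, parts_eq_image_part, image_congr fun a _ => hpart a]
  obtain rfl : ι = ι' := by
    ext ⟨t, ht⟩
    obtain ⟨a, -, rfl⟩ := mem_image.1 (P.parts_eq_image_part ▸ ht)
    exact congrFun h a
  rfl

theorem sigmaEmbeddingToFun_surjective :
    Function.Surjective (sigmaEmbeddingToFun (α := α) (β := β)) := by
  intro f
  classical
  set P := ofSetoid (Setoid.ker f)
  have hpart (a b : α) : b ∈ P.part a ↔ f a = f b := mem_part_ofSetoid_iff_rel
  let rep (t : P.parts) : α := (P.nonempty_of_mem_parts t.2).choose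
  have hrep (t : P.parts) : rep t ∈ t.1 := (P.nonempty_of_mem_parts t.2).choose_spec
  refine ⟨⟨P, ⟨fun t => f (rep t), fun t u h => ?_⟩⟩, funext fun a => ?_⟩
  · have hut : rep u ∈ P.part (rep t) := (hpart _ _).2 h
    rw [P.part_eq_of_mem t.2 (hrep t)] at hut
    exact Subtype.ext (P.eq_of_mem_parts t.2 u.2 hut (hrep u))
  · exact ((hpart a _).1 (hrep ⟨P.part a, P.part_mem.2 (mem_univ a)⟩)).symm

variable [Fintype β]

theorem card_fun_eq_sum_descFactorial :
    Fintype.card β ^ Fintype.card α =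
      ∑ P : Finpartition (univ : Finset α), (Fintype.card β).descFactorial #P.parts := by
  rw [← Fintype.card_fun, ← Fintype.card_of_bijective
    ⟨sigmaEmbeddingToFun_injective, sigmaEmbeddingToFun_surjective⟩, Fintype.card_sigma]
  simp_rw [Fintype.card_embedding_eq, Fintype.card_coe]

end Finpartition

theorem stirling_eq_card_filter (n s : ℕ) :
    stirling n s = #{P : Finpartition (univ : Finset (Fin n)) | #P.parts = s} := by
  rw [stirling, Nat.card_eq_fintype_card, Fintype.card_subtype]

theorem pow_eq_sum_stirling_mul_descFactorial (k n : ℕ) :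
    n ^ k = ∑ m ∈ range (k + 1), stirling k m * n.descFactorial m := by
  have h := Finpartition.card_fun_eq_sum_descFactorial (α := Fin k) (β := Fin n)
  rw [Fintype.card_fin, Fintype.card_fin] at h
  rw [h, ← sum_fiberwise_of_maps_to (g := fun P => #P.parts) (t := range (k + 1))]
  · refine sum_congr rfl fun m _ => ?_
    rw [sum_congr rfl fun P hP => by rw [(mem_filter.1 hP).2], sum_const, stirling_eq_card_filter,
      smul_eq_mul]
  · intro P _
    simpa [Nat.lt_succ_iff] using P.card_parts_le_card

theorem sum_stirling_mul_descPochhammer_int (k : ℕ) :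
    ∑ m ∈ range (k + 1), (stirling k m : ℤ[X]) * descPochhammer ℤ m = X ^ k := by
  refine eq_of_infinite_eval_eq _ _ (Set.infinite_of_injective_forall_mem
    Nat.cast_injective fun n : ℕ => ?_)
  simp only [Set.mem_ofPred_eq, eval_finsetSum, eval_mul, eval_natCast,
    descPochhammer_eval_eq_descFactorial, eval_pow, eval_X]
  exact_mod_cast (pow_eq_sum_stirling_mul_descFactorial k n).symm

theorem sum_stirling_mul_descPochhammer (R : Type*) [CommRing R] (k : ℕ) :
    ∑ m ∈ range (k + 1), (stirling k m : R[X]) * descPochhammer R m = X ^ k := by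
  simpa [Polynomial.map_sum] using
    congrArg (Polynomial.map (Int.castRingHom R)) (sum_stirling_mul_descPochhammer_int k)

theorem beta_eq_fwdDiff_iter (ℓ : ℕ) (Q : ℚ) :
    beta ℓ Q = (fwdDiff 1)^[ℓ] (fun i : ℕ => (descPochhammer ℚ i).eval Q) 0 := by
  rw [fwdDiff_iter_eq_sum_shift, beta]
  refine sum_congr rfl fun i _ => ?_
  simp [zsmul_eq_mul]

theorem sum_range_choose_mul_beta {m n : ℕ} (hmn : m ≤ n) (Q : ℚ) :
    ∑ ℓ ∈ range (n + 1), (m.choose ℓ : ℚ) * beta ℓ Q = (descPochhammer ℚ m).eval Q := by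
  have newton := shift_eq_sum_fwdDiff_iter 1 (fun i : ℕ => (descPochhammer ℚ i).eval Q) m 0
  simp only [zero_add, smul_eq_mul, mul_one, nsmul_eq_mul] at newton
  rw [newton, ← sum_subset (range_subset_range.2 (by omega : m + 1 ≤ n + 1))]
  · simp [beta_eq_fwdDiff_iter]
  · intro ℓ _ hℓ
    rw [Nat.choose_eq_zero_of_lt (by simpa using hℓ), Nat.cast_zero, zero_mul]

theorem sum_range_choose_smul_reindex {M : Type*} [AddCommMonoid M] (g : ℕ → M) {ℓ k : ℕ}
    (hℓk : ℓ ≤ k) :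
    ∑ s ∈ range (k - ℓ + 1), (ℓ + s).choose ℓ • g (ℓ + s) =
      ∑ m ∈ range (k + 1), m.choose ℓ • g m := by
  rw [← Nat.sub_add_comm hℓk, ← sum_Ico_eq_sum_range (fun m => m.choose ℓ • g m),
    range_eq_Ico, sum_subset (Ico_subset_Ico_left (Nat.zero_le ℓ))]
  intro m hm hmℓ
  rw [Nat.choose_eq_zero_of_lt (by simp_all), zero_smul]

/-- Sum rule: `∑_{ℓ=0}^{k} (1/ℓ!) β_ℓ |A_k^{(ℓ)}| = Q^k`, where
`|A_k^{(ℓ)}| = ℓ! ∑_{s=0}^{k-ℓ} C(ℓ+s,ℓ) S(k,ℓ+s)` is the number of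
partitions of a `k`-set with `ℓ` marked distinguishable blocks. -/
theorem sum_rule (k : ℕ) (Q : ℚ) :
    ∑ ℓ ∈ Finset.range (k + 1),
        (1 / (ℓ.factorial : ℚ)) * beta ℓ Q *
          ((ℓ.factorial * ∑ s ∈ Finset.range (k - ℓ + 1),
            (ℓ + s).choose ℓ * stirling k (ℓ + s) : ℕ) : ℚ) =
      Q ^ k := by
  have marked_count (ℓ : ℕ) (hℓ : ℓ ∈ range (k + 1)) :
      ∑ s ∈ range (k - ℓ + 1), (ℓ + s).choose ℓ * stirling k (ℓ + s) =
        ∑ m ∈ range (k + 1), m.choose ℓ * stirling k m := by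
    simpa only [smul_eq_mul] using
      sum_range_choose_smul_reindex (stirling k) (Nat.lt_succ_iff.1 (mem_range.1 hℓ))
  calc _ = ∑ ℓ ∈ range (k + 1), beta ℓ Q *
          ∑ m ∈ range (k + 1), (m.choose ℓ * stirling k m : ℚ) :=
        sum_congr rfl fun ℓ hℓ => by
          rw [marked_count ℓ hℓ]
          push_cast
          field_simp
    _ = ∑ m ∈ range (k + 1), (stirling k m : ℚ) *
          ∑ ℓ ∈ range (k + 1), (m.choose ℓ : ℚ) * beta ℓ Q := by
        simp_rw [mul_sum]
        rw [sum_comm]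
        exact sum_congr rfl fun m _ => sum_congr rfl fun ℓ _ => by ring
    _ = ∑ m ∈ range (k + 1), (stirling k m : ℚ) * (descPochhammer ℚ m).eval Q :=
        sum_congr rfl fun m hm => by
          rw [sum_range_choose_mul_beta (Nat.lt_succ_iff.1 (mem_range.1 hm))]
    _ = Q ^ k := by
        simpa [eval_finsetSum] using congrArg (eval Q) (sum_stirling_mul_descPochhammer ℚ k)
end

section
/- If G is a bridgeless connected graph and Phi_G(Q) > 0 for some positive integer Q (i.e., G admits a nowhere-zero Z_Q-flow), then G admits a nowhere-zero Z_{Q'}-flow for every integer Q' >= Q. -/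
open Finset

/-!
A nowhere-zero `ZMod Q`-flow lifts to integer values in `(-Q, Q) \ {0}` conserved modulo `Q`.
A lift of least total `|excess|` is an integer flow: otherwise some vertex has positive excess,
the vertices reachable from it along the orientation given by the signs of the values include
one of negative excess, and replacing each value on a walk between them by its other
representative modulo `Q` lowers the total by `2Q`. An integer flow with `0 < |f e| < Q ≤ Q'`
reduces to a nowhere-zero `ZMod Q'`-flow.
-/

namespace OGraph

variable (G : OGraph)

def incidence (e : G.E) (v : G.V) : ℤ :=
  (if G.s e = v then 1 else 0) - if G.t e = v then 1 else 0

/-- Net outflow of an integer edge-valuation at a vertex. -/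
def excess (f : G.E → ℤ) (v : G.V) : ℤ := ∑ e, f e * G.incidence e v

def imbalance (f : G.E → ℤ) : ℕ := ∑ v, (G.excess f v).natAbs

/-- `f` is a lift of a nowhere-zero `ZMod Q`-flow with values in `(-Q, Q)`. -/
def IsNZModFlow (Q : ℕ) (f : G.E → ℤ) : Prop :=
  (∀ e, f e ≠ 0 ∧ (f e).natAbs < Q) ∧ ∀ v, (Q : ℤ) ∣ G.excess f v

/-- Oriented along the sign of `f`, the edge `e` leads from `x` to `y`. -/
def Carries (f : G.E → ℤ) (e : G.E) (x y : G.V) : Prop :=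
  (G.s e = x ∧ G.t e = y ∧ 0 < f e) ∨ (G.s e = y ∧ G.t e = x ∧ f e < 0)

def IsWalk (f : G.E → ℤ) : G.V → List G.E → G.V → Prop
  | x, [], u => x = u
  | x, e :: l, u => ∃ y, G.Carries f e x y ∧ IsWalk f y l u

/-- Replaces `f e` by the other representative of its class modulo `Q` in `(-Q, Q)`. -/
def push (Q : ℕ) (f : G.E → ℤ) (e : G.E) : G.E → ℤ :=
  Function.update f e (f e - Q * (f e).sign)

variable {G}

theorem sum_excess_eq (f : G.E → ℤ) (S : Finset G.V) :
    ∑ v ∈ S, G.excess f v =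
      ∑ e, f e * ((if G.s e ∈ S then 1 else 0) - if G.t e ∈ S then 1 else 0) := by
  simp only [excess, incidence]
  rw [sum_comm]
  simp [← mul_sum, sum_sub_distrib]

theorem sum_excess_eq_zero (f : G.E → ℤ) : ∑ v, G.excess f v = 0 := by
  simp [sum_excess_eq]

theorem isFlow_intCast_iff (Q : ℕ) (f : G.E → ℤ) :
    G.IsFlow Q (fun e => (f e : ZMod Q)) ↔ ∀ v, (Q : ℤ) ∣ G.excess f v := by
  refine forall_congr' fun v => ?_
  rw [← ZMod.intCast_zmod_eq_zero_iff_dvd, ← sub_eq_zero]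
  simp [excess, incidence, mul_sub, sum_sub_distrib]

theorem IsNZModFlow.mono {Q Q' : ℕ} {f : G.E → ℤ} (hf : G.IsNZModFlow Q f)
    (h0 : ∀ v, G.excess f v = 0) (hQQ' : Q ≤ Q') : G.IsNZModFlow Q' f :=
  ⟨fun e => ⟨(hf.1 e).1, (hf.1 e).2.trans_le hQQ'⟩, fun v => h0 v ▸ dvd_zero _⟩

theorem nzFlowCount_pos_iff (Q : ℕ) [NeZero Q] :
    0 < G.nzFlowCount Q ↔ ∃ f, G.IsNZModFlow Q f := by
  rw [nzFlowCount, Nat.card_pos_iff, and_iff_left Subtype.finite]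
  constructor
  · rintro ⟨φ, hne, hφ⟩
    refine ⟨fun e => (φ e).val, fun e => ⟨?_, ?_⟩, (isFlow_intCast_iff Q _).1 ?_⟩
    · exact Int.natCast_ne_zero.2 ((φ e).val_ne_zero.2 (hne e))
    · exact (Int.natAbs_natCast _).trans_lt (φ e).val_lt
    · simpa using hφ
  · rintro ⟨f, hf, hflow⟩
    refine ⟨⟨fun e => (f e : ZMod Q), fun e h => ?_, (isFlow_intCast_iff Q f).2 hflow⟩⟩
    have hdvd : Q ∣ (f e).natAbs :=
      Int.ofNat_dvd_left.1 ((ZMod.intCast_zmod_eq_zero_iff_dvd _ _).1 h)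
    exact (hf e).2.not_ge (Nat.le_of_dvd (Int.natAbs_pos.2 (hf e).1) hdvd)

theorem excess_update (f : G.E → ℤ) (e : G.E) (a : ℤ) (v : G.V) :
    G.excess (Function.update f e a) v = G.excess f v + (a - f e) * G.incidence e v := by
  simp only [excess]
  rw [← add_sum_erase _ _ (mem_univ e), ← add_sum_erase _ _ (mem_univ e),
    sum_congr rfl fun e' he' => by rw [Function.update_of_ne (ne_of_mem_erase he')]]
  simp only [Function.update_self]
  ring

theorem push_of_ne {Q : ℕ} {f : G.E → ℤ} {e e' : G.E} (h : e' ≠ e) :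
    G.push Q f e e' = f e' :=
  Function.update_of_ne h _ _

theorem IsNZModFlow.push {Q : ℕ} {f : G.E → ℤ} (hf : G.IsNZModFlow Q f) (e : G.E) :
    G.IsNZModFlow Q (G.push Q f e) := by
  refine ⟨fun e' => ?_, fun v => ?_⟩
  · rcases eq_or_ne e' e with rfl | h
    · obtain ⟨hne, hlt⟩ := hf.1 e'
      simp only [OGraph.push, Function.update_self]
      rcases hne.lt_or_gt with hneg | hpos
      · rw [Int.sign_eq_neg_one_of_neg hneg]; omega
      · rw [Int.sign_eq_one_of_pos hpos]; omega
    · rw [push_of_ne h]; exact hf.1 e'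
  · rw [OGraph.push, excess_update]
    exact (hf.2 v).add (Dvd.intro (-(f e).sign * G.incidence e v) (by ring))

namespace Carries

variable {f : G.E → ℤ} {e : G.E} {x y : G.V}

theorem congr {g : G.E → ℤ} (he : G.Carries f e x y) (hfg : g e = f e) : G.Carries g e x y := by
  rwa [Carries, hfg]

theorem eq_of_carries {a b : G.V} (he : G.Carries f e x y) (he' : G.Carries f e a b) :
    a = x ∧ b = y := by
  rcases he with ⟨rfl, rfl, _⟩ | ⟨rfl, rfl, _⟩ <;>
    rcases he' with ⟨h, h', _⟩ | ⟨h, h', _⟩ <;>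
    first | exact ⟨h.symm, h'.symm⟩ | exact ⟨h'.symm, h.symm⟩ | omega

theorem excess_push (he : G.Carries f e x y) (Q : ℕ) (v : G.V) :
    G.excess (G.push Q f e) v =
      G.excess f v - Q * ((if x = v then 1 else 0) - if y = v then 1 else 0) := by
  rw [OGraph.push, excess_update]
  rcases he with ⟨rfl, rfl, h⟩ | ⟨rfl, rfl, h⟩
  · simp only [incidence, Int.sign_eq_one_of_pos h]; ring
  · simp only [incidence, Int.sign_eq_neg_one_of_neg h]; ring

end Carries

namespace IsWalk

variable {f : G.E → ℤ}

theorem append_singleton {x a b : G.V} {e : G.E} :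
    ∀ {l : List G.E}, G.IsWalk f x l a → G.Carries f e a b → G.IsWalk f x (l ++ [e]) b
  | [], hw, he => ⟨b, hw ▸ he, rfl⟩
  | _ :: _, ⟨z, hz, hw⟩, he => ⟨z, hz, append_singleton hw he⟩

theorem congr {g : G.E → ℤ} {u : G.V} :
    ∀ {x : G.V} {l : List G.E}, (∀ e ∈ l, g e = f e) → G.IsWalk f x l u → G.IsWalk g x l u
  | _, [], _, hw => hw
  | _, e :: _, hfg, ⟨y, he, hw⟩ =>
    ⟨y, he.congr (hfg e List.mem_cons_self),
      congr (fun e' he' => hfg e' (List.mem_cons_of_mem e he')) hw⟩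

theorem of_append_cons {x y u : G.V} {e : G.E} {l₂ : List G.E} (he : G.Carries f e x y) :
    ∀ {a : G.V} {l₁ : List G.E}, G.IsWalk f a (l₁ ++ e :: l₂) u → G.IsWalk f y l₂ u
  | _, [], ⟨_, he', hw⟩ => (he.eq_of_carries he').2 ▸ hw
  | _, _ :: _, ⟨_, _, hw⟩ => of_append_cons he hw

end IsWalk

/-- The vertices reachable from `x` have total excess at most `0`: `f` never leaves that set. -/
theorem exists_walk_excess_neg {f : G.E → ℤ} {x : G.V} (hx : 0 < G.excess f x) :
    ∃ u l, G.IsWalk f x l u ∧ G.excess f u < 0 := by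
  classical
  by_contra! h
  set S := univ.filter fun u => ∃ l, G.IsWalk f x l u
  have hreach : ∀ {a b : G.V} (e : G.E), a ∈ S → G.Carries f e a b → b ∈ S := by
    intro a b e ha he
    obtain ⟨l, hl⟩ := (mem_filter.1 ha).2
    exact mem_filter.2 ⟨mem_univ b, l ++ [e], hl.append_singleton he⟩
  have hpos : 0 < ∑ v ∈ S, G.excess f v :=
    hx.trans_le <| single_le_sum (fun v hv => (mem_filter.1 hv).2.elim (h v))
      (mem_filter.2 ⟨mem_univ x, [], rfl⟩)
  refine hpos.not_ge ((sum_excess_eq f S).trans_le (sum_nonpos fun e _ => ?_))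
  by_cases hs : G.s e ∈ S <;> by_cases ht : G.t e ∈ S <;> simp only [hs, ht, if_true, if_false]
  · simp
  · have : ¬ 0 < f e := fun hf => ht (hreach e hs (Or.inl ⟨rfl, rfl, hf⟩))
    omega
  · have : ¬ f e < 0 := fun hf => hs (hreach e ht (Or.inr ⟨rfl, rfl, hf⟩))
    omega
  · simp

theorem imbalance_push {f : G.E → ℤ} {e : G.E} {x y : G.V} (he : G.Carries f e x y)
    (hxy : x ≠ y) (Q : ℕ) :
    (G.imbalance (G.push Q f e) : ℤ) - G.imbalance f =
      ((G.excess f x - Q).natAbs - (G.excess f x).natAbs : ℤ) +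
        ((G.excess f y + Q).natAbs - (G.excess f y).natAbs) := by
  simp only [imbalance, Nat.cast_sum, ← sum_sub_distrib]
  rw [Fintype.sum_eq_add x y hxy fun v hv => by simp [he.excess_push, Ne.symm hv.1, Ne.symm hv.2]]
  simp [he.excess_push, hxy, Ne.symm hxy, sub_eq_add_neg]

/-- Pushing along the walk moves `Q` units of excess one edge at a time: only the last push changes
the imbalance. Loops are cut first, so that no edge is pushed twice. -/
theorem exists_imbalance_lt {Q : ℕ} {f : G.E → ℤ} (hf : G.IsNZModFlow Q f) {x u : G.V} :
    ∀ {l : List G.E}, G.IsWalk f x l u → 0 < G.excess f x → G.excess f u < 0 →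
      ∃ g, G.IsNZModFlow Q g ∧ G.imbalance g < G.imbalance f
  | [], hw, hx, hu => absurd (hw ▸ hx) hu.not_gt
  | e :: l, ⟨y, he, hw⟩, hx, hu => by
    obtain rfl | hxy := eq_or_ne x y
    · exact exists_imbalance_lt hf hw hx hu
    by_cases hel : e ∈ l
    · obtain ⟨l₁, l₂, rfl⟩ := List.append_of_mem hel
      exact exists_imbalance_lt hf (l := e :: l₂) ⟨y, he, hw.of_append_cons he⟩ hx hu
    have hQ : 0 < Q := by have := hf.1 e; omega
    have hQx : (Q : ℤ) ≤ G.excess f x := Int.le_of_dvd hx (hf.2 x)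
    have hpush := imbalance_push he hxy Q
    by_cases hy : G.excess f y < 0
    · have hQy : G.excess f y ≤ -Q := by
        have := Int.le_of_dvd (neg_pos.2 hy) (hf.2 y).neg_right
        omega
      exact ⟨_, hf.push e, by omega⟩
    · have hux : u ≠ x := by rintro rfl; omega
      have huy : u ≠ y := by rintro rfl; omega
      obtain ⟨g, hg, hlt⟩ := exists_imbalance_lt (hf.push e)
        (hw.congr fun e' he' => push_of_ne (ne_of_mem_of_not_mem he' hel))
        (by rw [he.excess_push]; simp only [hxy, ↓reduceIte]; omega)
        (by simpa [he.excess_push, hux.symm, huy.symm])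
      exact ⟨g, hg, by omega⟩
termination_by l => l.length

theorem exists_isNZModFlow_excess_eq_zero {Q : ℕ} {f : G.E → ℤ} (hf : G.IsNZModFlow Q f) :
    ∃ g, G.IsNZModFlow Q g ∧ ∀ v, G.excess g v = 0 := by
  by_cases h0 : ∀ v, G.excess f v = 0
  · exact ⟨f, hf, h0⟩
  push Not at h0
  obtain ⟨x, -, hx⟩ := exists_pos_of_sum_zero_of_exists_nonzero _ (sum_excess_eq_zero f)
    (by simpa using h0)
  obtain ⟨u, l, hw, hu⟩ := exists_walk_excess_neg hx
  obtain ⟨g, hg, hlt⟩ := exists_imbalance_lt hf hw hx hu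
  exact exists_isNZModFlow_excess_eq_zero hg
termination_by G.imbalance f

end OGraph

theorem nzFlow_monotone_general (G : OGraph)
    (Q : ℕ) (hQ : 0 < Q) (hflow : 0 < G.nzFlowCount Q) :
    ∀ Q' : ℕ, Q ≤ Q' → 0 < G.nzFlowCount Q' := by
  intro Q' hQQ'
  have : NeZero Q := ⟨hQ.ne'⟩
  have : NeZero Q' := ⟨by omega⟩
  obtain ⟨f, hf⟩ := (G.nzFlowCount_pos_iff Q).1 hflow
  obtain ⟨g, hg, hg0⟩ := G.exists_isNZModFlow_excess_eq_zero hf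
  exact (G.nzFlowCount_pos_iff Q').2 ⟨g, hg.mono hg0 hQQ'⟩

/-- If a bridgeless connected graph `G` admits a nowhere-zero `ZMod Q`-flow for
some positive integer `Q`, then it admits a nowhere-zero `ZMod Q'`-flow for
every integer `Q' ≥ Q`. -/
theorem nzFlow_monotone (G : OGraph)
    (hconn : G.k Finset.univ = 1)
    (hbridgeless : ∀ e : G.E, G.k (Finset.univ.erase e) = G.k Finset.univ)
    (Q : ℕ) (hQ : 0 < Q) (hflow : 0 < G.nzFlowCount Q) :
    ∀ Q' : ℕ, Q ≤ Q' → 0 < G.nzFlowCount Q' :=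
  nzFlow_monotone_general G Q hQ hflow
end

section
/- Suppose f_n(z) = alpha_star(z) mu_star(z)^n + sum_{j=1}^N alpha_j(z) mu_j(z)^n on an interval [z0 - eps, z0], where all functions are continuous and real, mu_star(w) > 0 and |mu_j(w)/mu_star(w)| <= r < 1 for all j and all w in the interval, |alpha_j| <= M, alpha_star(z0 - eps) < 0, and f_n(z0) > 0 for all n. Then for all sufficiently large n, f_n has a zero in the open interval (z0 - eps, z0). -/
open Finset Set Filter

/-!
At the left endpoint the dominant term `α⋆ μ⋆ⁿ` is negative and outweighs the subdominant
terms, which are `O((r μ⋆)ⁿ)`; so `f_n(z₀ - ε) < 0` for large `n`, while `f_n(z₀) > 0`, and the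
intermediate value theorem gives a zero in between.
-/

theorem abs_sum_mul_pow_le {ι : Type*} (s : Finset ι) (a b : ι → ℝ) {M c : ℝ}
    (ha : ∀ j ∈ s, |a j| ≤ M) (hb : ∀ j ∈ s, |b j| ≤ c) (n : ℕ) :
    |∑ j ∈ s, a j * b j ^ n| ≤ #s * (M * c ^ n) := by
  calc |∑ j ∈ s, a j * b j ^ n| ≤ ∑ j ∈ s, |a j * b j ^ n| := abs_sum_le_sum_abs _ _
    _ ≤ ∑ _j ∈ s, M * c ^ n := by
        refine sum_le_sum fun j hj => ?_
        rw [abs_mul, abs_pow]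
        exact mul_le_mul (ha j hj) (pow_le_pow_left₀ (abs_nonneg _) (hb j hj) n)
          (by positivity) ((abs_nonneg _).trans (ha j hj))
    _ = #s * (M * c ^ n) := by rw [sum_const, nsmul_eq_mul]

theorem eventually_mul_pow_add_sum_mul_pow_neg {ι : Type*} [Fintype ι] {A m r M : ℝ}
    (a b : ι → ℝ) (hA : A < 0) (hm : 0 < m) (hr : r < 1)
    (ha : ∀ j, |a j| ≤ M) (hb : ∀ j, |b j| ≤ r * m) :
    ∀ᶠ n : ℕ in atTop, A * m ^ n + ∑ j, a j * b j ^ n < 0 := by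
  set r' := max r 0
  have hsmall : ∀ᶠ n : ℕ in atTop, Fintype.card ι * M * r' ^ n < -A := by
    have := (tendsto_pow_atTop_nhds_zero_of_lt_one (le_max_right r 0) (max_lt hr one_pos)
      ).const_mul (Fintype.card ι * M)
    rw [mul_zero] at this
    exact this.eventually (eventually_lt_nhds (neg_pos.2 hA))
  filter_upwards [hsmall] with n hn
  have hb' : ∀ j ∈ (univ : Finset ι), |b j| ≤ r' * m := fun j _ =>
    (hb j).trans (mul_le_mul_of_nonneg_right (le_max_left r 0) hm.le)
  have hsum := (le_abs_self _).trans
    (abs_sum_mul_pow_le univ a b (fun j _ => ha j) hb' n)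
  calc A * m ^ n + ∑ j, a j * b j ^ n
      ≤ A * m ^ n + Fintype.card ι * M * r' ^ n * m ^ n := by
        rw [card_univ, mul_pow] at hsum; linarith
    _ < A * m ^ n + -A * m ^ n := by gcongr
    _ = 0 := by ring

/-- Key step for the family `G(6n,6)` at `Q = 5`:
`f_n = α⋆ μ⋆^n + ∑_j α_j μ_j^n` on `[z₀-ε, z₀]`, with `μ⋆ > 0` dominant,
`|μ_j/μ⋆| ≤ r < 1`, amplitudes bounded by `M`, `α⋆(z₀-ε) < 0`, and
`f_n(z₀) > 0` for all `n`.  Then for all sufficiently large `n`, `f_n` has a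
zero in the open interval `(z₀-ε, z₀)`. -/
theorem real_zero_below (N : ℕ) (αstar μstar : ℝ → ℝ) (α μ : Fin N → ℝ → ℝ)
    (z₀ eps r M : ℝ) (heps : 0 < eps) (hr : r < 1)
    (hcontαs : ContinuousOn αstar (Icc (z₀ - eps) z₀))
    (hcontμs : ContinuousOn μstar (Icc (z₀ - eps) z₀))
    (hcontα : ∀ j, ContinuousOn (α j) (Icc (z₀ - eps) z₀))
    (hcontμ : ∀ j, ContinuousOn (μ j) (Icc (z₀ - eps) z₀))
    (hpos : ∀ w ∈ Icc (z₀ - eps) z₀, 0 < μstar w)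
    (hdom : ∀ j, ∀ w ∈ Icc (z₀ - eps) z₀, |μ j w| ≤ r * μstar w)
    (hM : ∀ j, ∀ w ∈ Icc (z₀ - eps) z₀, |α j w| ≤ M)
    (hneg : αstar (z₀ - eps) < 0)
    (hend : ∀ n : ℕ,
      0 < αstar z₀ * (μstar z₀) ^ n + ∑ j, α j z₀ * (μ j z₀) ^ n) :
    ∃ n₀ : ℕ, ∀ n ≥ n₀, ∃ w ∈ Ioo (z₀ - eps) z₀,
      αstar w * (μstar w) ^ n + ∑ j, α j w * (μ j w) ^ n = 0 := by
  have hle : z₀ - eps ≤ z₀ := by linarith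
  have hleft : z₀ - eps ∈ Icc (z₀ - eps) z₀ := left_mem_Icc.2 hle
  obtain ⟨n₀, hstart⟩ := eventually_atTop.1 <|
    eventually_mul_pow_add_sum_mul_pow_neg (fun j => α j (z₀ - eps)) (fun j => μ j (z₀ - eps))
      hneg (hpos _ hleft) hr (fun j => hM j _ hleft) (fun j => hdom j _ hleft)
  refine ⟨n₀, fun n hn => ?_⟩
  have hcont : ContinuousOn (fun w => αstar w * μstar w ^ n + ∑ j, α j w * μ j w ^ n)
      (Icc (z₀ - eps) z₀) :=
    (hcontαs.mul (hcontμs.pow n)).add <|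
      continuousOn_finsetSum _ fun j _ => (hcontα j).mul ((hcontμ j).pow n)
  exact intermediate_value_Ioo hle hcont ⟨hstart n hn, hend n⟩
end
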